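/- arXiv:1810.09056 — 2 statements merged into one kernel-verified Lean document; each statement's English description precedes it below -/
import Mathlib

section
/- Let $(\mathfrak{a}, \mathfrak{m})$ be a complete local ring and $f \in \mathfrak{a}[X]$ a polynomial with at least one coefficient outside $\mathfrak{m}$; let $k$ be the largest index with $f_k \notin \mathfrak{m}$. Then the factorization $f = u q$ with $q$ monic of degree $k$ and $u$ of the form $u_0 + u_1 X + \cdots + u_{d-k} X^{d-k}$, $u_0 \notin \mathfrak{m}$, $u_i \in \mathfrak{m}$ for $i \geq 1$, is unique. -/
open Polynomial IsLocalRing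

/-! Put `δ = q - q'` and `u₀ = u.coeff 0`. From `u q = u' q'` we get
`C u₀ · δ = q' · (u' - u) - (u - C u₀) · δ`, and the last term has coefficients in `𝔪 · I` as soon
as those of `δ` lie in an ideal `I`. So modulo `𝔪 I` the monic `q'` divides the monic `q` of the same degree,
hence they agree there: `δ` has coefficients in `𝔪 I`. Inductively `δ` has coefficients in every
`𝔪ⁿ`, so `δ = 0` because `𝔞` is `𝔪`-adically separated, and then `u = u'` by cancelling the
monic `q`. -/

namespace Polynomial

variable {R : Type*} [CommRing R]

theorem eq_zero_of_forall_mem_map_C_pow {I : Ideal R} [IsHausdorff I R] {p : R[X]}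
    (h : ∀ n, p ∈ (I ^ n).map C) : p = 0 := by
  ext j
  refine IsHausdorff.haus' (I := I) _ fun n => ?_
  simpa [SModEq.zero] using Ideal.mem_map_C_iff.mp (h n) j

theorem sub_mem_map_C_mul_of_mul_eq_mul {I J : Ideal R} {u u' q q' : R[X]}
    (hq : q.Monic) (hq' : q'.Monic) (hdeg : q.natDegree = q'.natDegree)
    (hu0 : IsUnit (u.coeff 0)) (hu : ∀ i, 1 ≤ i → u.coeff i ∈ J)
    (h : u * q = u' * q') (hqq' : q - q' ∈ I.map C) :
    q - q' ∈ (J * I).map C := by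
  set π := Ideal.Quotient.mk (J * I)
  have hsmall : (u - C (u.coeff 0)) * (q - q') ∈ (J * I).map C := by
    rw [Ideal.map_mul]
    refine Ideal.mul_mem_mul (Ideal.mem_map_C_iff.mpr fun i => ?_) hqq'
    rcases i with _ | i
    · simp
    · simpa [coeff_C] using hu (i + 1) (by omega)
  have hkey : C (u.coeff 0) * (q - q') - q' * (u' - u) = -((u - C (u.coeff 0)) * (q - q')) := by
    linear_combination h
  rw [← Ideal.mk_ker (I := J * I), ← ker_mapRingHom, RingHom.mem_ker, coe_mapRingHom] at hsmall ⊢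
  have hdvd : q'.map π ∣ C (π (u.coeff 0)) * (q - q').map π := by
    refine ⟨(u' - u).map π, ?_⟩
    rw [← map_C, ← Polynomial.map_mul, ← Polynomial.map_mul, ← sub_eq_zero, ← Polynomial.map_sub,
      hkey, Polynomial.map_neg, hsmall, neg_zero]
  rw [((hu0.map π).map C).dvd_mul_left, Polynomial.map_sub, dvd_sub_self_right] at hdvd
  nontriviality (R ⧸ J * I)
  rw [Polynomial.map_sub, sub_eq_zero]
  exact eq_of_monic_of_dvd_of_natDegree_le (hq'.map π) (hq.map π) hdvd
    (by rw [hq.natDegree_map, hq'.natDegree_map, hdeg])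

theorem sub_mem_map_C_pow_of_mul_eq_mul {I : Ideal R} {u u' q q' : R[X]}
    (hq : q.Monic) (hq' : q'.Monic) (hdeg : q.natDegree = q'.natDegree)
    (hu0 : IsUnit (u.coeff 0)) (hu : ∀ i, 1 ≤ i → u.coeff i ∈ I)
    (h : u * q = u' * q') (n : ℕ) :
    q - q' ∈ (I ^ n).map C := by
  induction n with
  | zero => simp [Ideal.map_top]
  | succ n ih =>
    rw [pow_succ']
    exact sub_mem_map_C_mul_of_mul_eq_mul hq hq' hdeg hu0 hu h ih

theorem eq_and_eq_of_mul_eq_mul_of_monic {I : Ideal R} [IsHausdorff I R] {u u' q q' : R[X]}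
    (hq : q.Monic) (hq' : q'.Monic) (hdeg : q.natDegree = q'.natDegree)
    (hu0 : IsUnit (u.coeff 0)) (hu : ∀ i, 1 ≤ i → u.coeff i ∈ I)
    (h : u * q = u' * q') :
    u = u' ∧ q = q' := by
  have hqq' : q = q' := sub_eq_zero.mp <|
    eq_zero_of_forall_mem_map_C_pow (sub_mem_map_C_pow_of_mul_eq_mul hq hq' hdeg hu0 hu h)
  subst hqq'
  exact ⟨hq.isRegular.right h, rfl⟩

end Polynomial

theorem stmt_7_general (A : Type*) [CommRing A] [IsLocalRing A]
    [IsAdicComplete (maximalIdeal A) A]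
    (f : A[X]) (K : ℕ)
    (q u q' u' : A[X])
    (hq : q.Monic) (hqdeg : q.natDegree = K)
    (hu0 : u.coeff 0 ∉ maximalIdeal A)
    (hui : ∀ i, 1 ≤ i → u.coeff i ∈ maximalIdeal A)
    (hf : f = u * q)
    (hq2 : q'.Monic) (hqdeg2 : q'.natDegree = K)
    (hf2 : f = u' * q') :
    u = u' ∧ q = q' :=
  eq_and_eq_of_mul_eq_mul_of_monic (I := maximalIdeal A) hq hq2 (hqdeg.trans hqdeg2.symm)
    (notMem_maximalIdeal.mp hu0) hui (hf.symm.trans hf2)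

/-- Weierstrass preparation for polynomials, uniqueness. -/
theorem stmt_7 (A : Type*) [CommRing A] [IsLocalRing A]
    [IsAdicComplete (maximalIdeal A) A]
    (f : A[X]) (K : ℕ)
    (hK : f.coeff K ∉ maximalIdeal A)
    (hK' : ∀ i, K < i → f.coeff i ∈ maximalIdeal A)
    (q u q' u' : A[X])
    (hq : q.Monic) (hqdeg : q.natDegree = K)
    (hu : u.natDegree ≤ f.natDegree - K)
    (hu0 : u.coeff 0 ∉ maximalIdeal A)
    (hui : ∀ i, 1 ≤ i → u.coeff i ∈ maximalIdeal A)
    (hf : f = u * q)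
    (hq2 : q'.Monic) (hqdeg2 : q'.natDegree = K)
    (hu2 : u'.natDegree ≤ f.natDegree - K)
    (hu02 : u'.coeff 0 ∉ maximalIdeal A)
    (hui2 : ∀ i, 1 ≤ i → u'.coeff i ∈ maximalIdeal A)
    (hf2 : f = u' * q') :
    u = u' ∧ q = q' :=
  stmt_7_general A f K q u q' u' hq hqdeg hu0 hui hf hq2 hqdeg2 hf2
end

section
/- Let $R$ be a commutative ring and $a, b \in R[y]$. For every subresultant $S_j$ of $a$ and $b$ there exist polynomials $u_j, v_j \in R[y]$ such that $S_j = u_j a + v_j b$; in particular every subresultant of $a$ and $b$ lies in the ideal $\langle a, b \rangle$ of $R[y]$. -/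
open Polynomial

/-- The `j`-th subresultant polynomial of `a` and `b`, defined by the usual
determinantal formula: the determinant of the `(m+n-2j) × (m+n-2j)` Sylvester-like
matrix whose first `n-j` rows hold the coefficients of `X^(n-j-1-i) * a` and whose
last `m-j` rows hold the coefficients of `X^(m-j-1-i) * b` (column `c` holding the
coefficient of degree `m+n-j-1-c`), the last column containing the polynomials
themselves. -/
noncomputable def subresultant {R : Type*} [CommRing R] (a b : R[X]) (j : ℕ) :
    R[X] :=
  letI m := a.natDegree
  letI n := b.natDegree
  Matrix.det (Matrix.of fun r c : Fin (m + n - 2 * j) =>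
    if (r : ℕ) < n - j then
      if (c : ℕ) = m + n - 2 * j - 1 then X ^ (n - j - 1 - (r : ℕ)) * a
      else if (c : ℕ) ≤ m + (r : ℕ) then C (a.coeff (m + (r : ℕ) - (c : ℕ)))
      else 0
    else
      if (c : ℕ) = m + n - 2 * j - 1 then
        X ^ (m - j - 1 - ((r : ℕ) - (n - j))) * b
      else if (c : ℕ) ≤ n + ((r : ℕ) - (n - j)) then
        C (b.coeff (n + ((r : ℕ) - (n - j)) - (c : ℕ)))
      else 0)

/-! Every term of the Leibniz expansion of the determinant contains one entry of the last
column, and each entry of that column is a multiple of `a` or of `b`. -/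

theorem Matrix.det_mem_of_col_mem {ι R : Type*} [Fintype ι] [DecidableEq ι] [CommRing R]
    (M : Matrix ι ι R) (I : Ideal R) (c : ι) (hc : ∀ r, M r c ∈ I) : M.det ∈ I := by
  rw [Matrix.det_apply']
  exact Ideal.sum_mem _ fun σ _ =>
    Ideal.mul_mem_left _ _ (Ideal.prod_mem I (Finset.mem_univ c) (hc (σ c)))

theorem subresultant_mem_span_pair {R : Type*} [CommRing R] (a b : R[X]) (j : ℕ)
    (hj : 2 * j < a.natDegree + b.natDegree) : subresultant a b j ∈ Ideal.span {a, b} := by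
  have ha : a ∈ Ideal.span {a, b} := Ideal.subset_span (Set.mem_insert a {b})
  have hb : b ∈ Ideal.span {a, b} := Ideal.subset_span (Set.mem_insert_of_mem a rfl)
  refine Matrix.det_mem_of_col_mem _ _ ⟨a.natDegree + b.natDegree - 2 * j - 1, by omega⟩ ?_
  intro r
  simp only [Matrix.of_apply, if_true]
  split
  · exact Ideal.mul_mem_left _ _ ha
  · exact Ideal.mul_mem_left _ _ hb

/-- every subresultant of `a` and `b` is a combination `u*a + v*b`;
in particular it lies in the ideal `⟨a, b⟩` of `R[y]`. -/
theorem stmt_11 (R : Type*) [CommRing R] (a b : R[X])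
    (hb : b.natDegree ≤ a.natDegree) (j : ℕ) (hj : j < b.natDegree) :
    (∃ u v : R[X], subresultant a b j = u * a + v * b) ∧
      subresultant a b j ∈ Ideal.span {a, b} := by
  have hmem := subresultant_mem_span_pair a b j (by omega)
  obtain ⟨u, v, h⟩ := Ideal.mem_span_pair.mp hmem
  exact ⟨⟨u, v, h.symm⟩, hmem⟩
end
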